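/- Let F be a finite field of order m, M = (m^N − 1)/(m − 1), and a_1, …, a_M ∈ F^N nonzero pairwise linearly independent vectors (one representative from each one-dimensional subspace). Then V_{F^N} is the orthogonal direct sum of the subspaces V_{F^N}^{a_1}, …, V_{F^N}^{a_M}; in particular, Σ_i dim V_{F^N}^{a_i} = m^N − 1 = dim V_{F^N}. -/

import Mathlib

open Finset

/-- A strictly positive probability mass function on a finite alphabet. -/
def IsPPMF {A : Type*} [Fintype A] (p : A → ℝ) : Prop :=
  (∀ x, 0 < p x) ∧ ∑ x, p x = 1

/-- Addition of PMFs: normalized pointwise product. -/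
noncomputable def padd {A : Type*} [Fintype A] (p q : A → ℝ) : A → ℝ :=
  fun x => p x * q x / ∑ y, p y * q y

/-- Scalar multiplication of PMFs: normalized pointwise real power. -/
noncomputable def psmul {A : Type*} [Fintype A] (α : ℝ) (p : A → ℝ) : A → ℝ :=
  fun x => p x ^ α / ∑ y, p y ^ α

/-- The uniform PMF, the zero vector of the PMF vector space. -/
noncomputable def unif (A : Type*) [Fintype A] : A → ℝ :=
  fun _ => (Fintype.card A : ℝ)⁻¹

/-- The isometric map L from PMFs to ℝ^|A|. -/
noncomputable def Lmap {A : Type*} [Fintype A] (p : A → ℝ) : A → ℝ :=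
  fun x => Real.log (p x ^ (Fintype.card A) / ∏ y, p y)

/-- The dot product `a·x = Σ_k a_k x_k` over a field `F`. -/
def adot {F : Type*} [Field F] {N : ℕ} (a x : Fin N → F) : F :=
  ∑ k, a k * x k

/-- The soft parity check interaction with coefficient vector `a` and
underlying PMF `q`: `p(x) = |F|^{-(N-1)} q(a·x)`. -/
noncomputable def spci {F : Type*} [Field F] [Fintype F] {N : ℕ}
    (a : Fin N → F) (q : F → ℝ) : (Fin N → F) → ℝ :=
  fun x => ((Fintype.card F : ℝ) ^ (N - 1))⁻¹ * q (adot a x)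

/-- The `i`-th one-dimensional marginal of a joint PMF `p` on `F^N`. -/
noncomputable def marginal {F : Type*} [Field F] [Fintype F] [DecidableEq F] {N : ℕ}
    (p : (Fin N → F) → ℝ) (i : Fin N) : F → ℝ :=
  fun t => ∑ x : Fin N → F, if x i = t then p x else 0

/-- The coordinate-sum functional on ℝ^A, as a linear map. -/
def sumLM (A : Type*) [Fintype A] : (A → ℝ) →ₗ[ℝ] ℝ where
  toFun v := ∑ i, v i
  map_add' := by intro u v; simp [Finset.sum_add_distrib]
  map_smul' := by intro c v; simp [Finset.mul_sum]

/-!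
Under `Lmap`, `V_{F^N}` becomes the zero-sum hyperplane of `ℝ^(F^N)`, and `V_{F^N}^a` becomes the
image of the zero-sum hyperplane of `ℝ^F` under the pullback `w ↦ w ∘ (a · _)`, which is injective
because `x ↦ a · x` is onto; so it has dimension `m - 1`. For linearly independent `a, b` the map
`x ↦ (a · x, b · x)` is onto `F²` with fibres of equal size, so `∑ₓ v (a · x) * w (b · x)` is a
multiple of `(∑ v) * (∑ w) = 0`. Pairwise orthogonal subspaces are independent, so their sum has
dimension `M * (m - 1) = m ^ N - 1`, the dimension of the whole hyperplane.
-/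

open Function

theorem AddMonoidHom.sum_comp_of_surjective {G H M : Type*} [AddCommGroup G] [AddCommGroup H]
    [Fintype G] [Fintype H] [DecidableEq H] [AddCommMonoid M]
    (ℓ : G →+ H) (hℓ : Surjective ℓ) (f : H → M) :
    ∑ x, f (ℓ x) = #{x | ℓ x = 0} • ∑ y, f y := by
  rw [← sum_fiberwise' univ ℓ f, smul_sum]
  refine sum_congr rfl fun y _ => ?_
  rw [sum_const, AddMonoidHom.card_fiber_eq_of_mem_range ℓ (hℓ y) (hℓ 0)]

theorem Matrix.mulVec_surjective_of_linearIndependent_row {K m n : Type*} [Field K]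
    [Fintype m] [Fintype n] {A : Matrix m n K} (hA : LinearIndependent K A.row) :
    Surjective A.mulVec := by
  have h : LinearMap.range A.mulVecLin = ⊤ :=
    Submodule.eq_top_of_finrank_eq <| by
      rw [Module.finrank_fintype_fun_eq_card, ← hA.rank_matrix]
      rfl
  exact LinearMap.range_eq_top.1 h

theorem iSupIndep_of_pairwise_dotProduct_eq_zero {R ι A : Type*} [CommRing R] [LinearOrder R]
    [IsStrictOrderedRing R] [Fintype A] {W : ι → Submodule R (A → R)}
    (h : Pairwise fun i j => ∀ v ∈ W i, ∀ w ∈ W j, v ⬝ᵥ w = 0) : iSupIndep W := by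
  refine iSupIndep_def.2 fun i => Submodule.disjoint_def.2 fun v hv hv' => ?_
  have hle : ⨆ j, ⨆ (_ : j ≠ i), W j ≤ LinearMap.ker (dotProductBilin R R v) :=
    iSup₂_le fun j hj w hw => h hj.symm v hv w hw
  exact dotProduct_self_eq_zero.1 (hle hv')

theorem Submodule.finrank_iSup_of_iSupIndep {K V ι : Type*} [DivisionRing K] [AddCommGroup V]
    [Module K V] [FiniteDimensional K V] [Fintype ι] [DecidableEq ι] {W : ι → Submodule K V}
    (hW : iSupIndep W) : Module.finrank K ↥(⨆ i, W i) = ∑ i, Module.finrank K (W i) := by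
  rw [Submodule.iSup_eq_range_dfinsupp_lsum,
    LinearMap.finrank_range_of_inj hW.dfinsupp_lsum_injective]
  exact Module.finrank_directSum K fun i => W i

theorem sum_pi_fin_two_mul_eq_sum_mul_sum {R H : Type*} [CommSemiring R] [Fintype H]
    (v w : H → R) :
    ∑ y : Fin 2 → H, v (y 0) * w (y 1) = (∑ s, v s) * ∑ t, w t := by
  rw [Fintype.sum_mul_sum, ← Fintype.sum_prod_type']
  exact Fintype.sum_equiv (piFinTwoEquiv fun _ => H) _ _ fun y => rfl

section Lmap

variable {A : Type*} [Fintype A]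

theorem Lmap_apply {p : A → ℝ} (hp : ∀ x, 0 < p x) (x : A) :
    Lmap p x = Fintype.card A * Real.log (p x) - ∑ y, Real.log (p y) := by
  rw [Lmap, Real.log_div (pow_ne_zero _ (hp x).ne') (prod_ne_zero_iff.2 fun y _ => (hp y).ne'),
    Real.log_pow, Real.log_prod fun y _ => (hp y).ne']

theorem sum_Lmap {p : A → ℝ} (hp : ∀ x, 0 < p x) : ∑ x, Lmap p x = 0 := by
  simp only [Lmap_apply hp, sum_sub_distrib, ← mul_sum, sum_const, card_univ, nsmul_eq_mul]
  ring

theorem Lmap_const_mul {c : ℝ} (hc : c ≠ 0) (p : A → ℝ) : Lmap (fun x => c * p x) = Lmap p := by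
  funext x
  simp only [Lmap, mul_pow, prod_mul_distrib, prod_const, card_univ]
  rw [mul_div_mul_left _ _ (pow_ne_zero _ hc)]

theorem exists_isPPMF_Lmap_eq [Nonempty A] {v : A → ℝ} (hv : ∑ x, v x = 0) :
    ∃ q : A → ℝ, IsPPMF q ∧ Lmap q = v := by
  set n : ℝ := (Fintype.card A : ℝ)
  have hn : n ≠ 0 := by positivity
  set Z : ℝ := ∑ s, Real.exp (v s / n)
  have hZ : 0 < Z := sum_pos (fun s _ => Real.exp_pos _) univ_nonempty
  have hq : ∀ t, 0 < Real.exp (v t / n) / Z := fun t => div_pos (Real.exp_pos _) hZ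
  refine ⟨fun t => Real.exp (v t / n) / Z, ⟨hq, by rw [← sum_div, div_self hZ.ne']⟩, ?_⟩
  funext t
  have hlog : ∀ s, Real.log (Real.exp (v s / n) / Z) = v s / n - Real.log Z := fun s => by
    rw [Real.log_div (Real.exp_ne_zero _) hZ.ne', Real.log_exp]
  simp only [Lmap_apply hq, hlog, sum_sub_distrib, ← sum_div, hv, sum_const, card_univ,
    nsmul_eq_mul]
  field_simp
  ring

theorem Lmap_comp_addMonoidHom {G H : Type*} [AddCommGroup G] [AddCommGroup H] [Fintype G]
    [Fintype H] [DecidableEq H] (ℓ : G →+ H) (hℓ : Surjective ℓ) {q : H → ℝ}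
    (hq : ∀ t, 0 < q t) :
    Lmap (fun x => q (ℓ x)) = fun x => #{x | ℓ x = 0} * Lmap q (ℓ x) := by
  have hcard : Fintype.card G = #{x | ℓ x = 0} * Fintype.card H := by
    simpa using ℓ.sum_comp_of_surjective hℓ fun _ => (1 : ℕ)
  funext x
  rw [Lmap_apply (fun x => hq (ℓ x)), Lmap_apply hq,
    ℓ.sum_comp_of_surjective hℓ fun t => Real.log (q t), hcard]
  push_cast
  ring

end Lmap

theorem mem_ker_sumLM {A : Type*} [Fintype A] {v : A → ℝ} :
    v ∈ LinearMap.ker (sumLM A) ↔ ∑ x, v x = 0 :=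
  Iff.rfl

theorem finrank_ker_sumLM (A : Type*) [Fintype A] [Nonempty A] :
    Module.finrank ℝ (LinearMap.ker (sumLM A)) = Fintype.card A - 1 := by
  classical
  have hne : sumLM A ≠ 0 := fun h => by
    simpa [sumLM] using LinearMap.congr_fun h (Pi.single (Classical.arbitrary A) 1)
  have := Module.Dual.finrank_ker_add_one_of_ne_zero hne
  rw [Module.finrank_fintype_fun_eq_card] at this
  omega

section adot

variable {F : Type*} [Field F] {N : ℕ}

def adotHom (a : Fin N → F) : (Fin N → F) →+ F :=
  AddMonoidHom.mk' (adot a) (dotProduct_add a)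

theorem adot_surjective {a : Fin N → F} (ha : a ≠ 0) : Surjective (adot a) := by
  obtain ⟨k, hk⟩ := Function.ne_iff.1 ha
  intro t
  refine ⟨Pi.single k ((a k)⁻¹ * t), ?_⟩
  classical
  simp [adot, Pi.single_apply, mul_inv_cancel_left₀ hk]

end adot

section spci

variable {F : Type*} [Field F] [Fintype F] {N : ℕ}

theorem Lmap_spci [DecidableEq F] {a : Fin N → F} (ha : a ≠ 0) {q : F → ℝ} (hq : ∀ t, 0 < q t) :
    Lmap (spci a q) = fun x => #{x | adot a x = 0} * Lmap q (adot a x) := by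
  have hc : ((Fintype.card F : ℝ) ^ (N - 1))⁻¹ ≠ 0 := by simp
  exact (Lmap_const_mul hc _).trans (Lmap_comp_addMonoidHom (adotHom a) (adot_surjective ha) hq)

def spciSubspace (a : Fin N → F) : Submodule ℝ ((Fin N → F) → ℝ) :=
  (LinearMap.ker (sumLM F)).map (LinearMap.funLeft ℝ ℝ (adot a))

theorem coe_spciSubspace {a : Fin N → F} (ha : a ≠ 0) :
    (spciSubspace a : Set ((Fin N → F) → ℝ)) =
      {v | ∃ q : F → ℝ, IsPPMF q ∧ v = Lmap (spci a q)} := by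
  classical
  set k : ℝ := Nat.cast #{x | adot a x = 0}
  have hk : k ≠ 0 :=
    Nat.cast_ne_zero.2 (card_ne_zero_of_mem (mem_filter.2 ⟨mem_univ 0, dotProduct_zero a⟩))
  ext v
  constructor
  · rintro ⟨w, hw, rfl⟩
    rw [SetLike.mem_coe, mem_ker_sumLM] at hw
    obtain ⟨q, hq, hLq⟩ := exists_isPPMF_Lmap_eq (v := k⁻¹ • w) <| by
      simp only [Pi.smul_apply, smul_eq_mul, ← mul_sum, hw, mul_zero]
    refine ⟨q, hq, ?_⟩
    rw [Lmap_spci ha hq.1, hLq]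
    funext x
    exact (mul_inv_cancel_left₀ hk _).symm
  · rintro ⟨q, hq, rfl⟩
    refine ⟨k • Lmap q, ?_, ?_⟩
    · change ∑ t, k * Lmap q t = 0
      rw [← mul_sum, sum_Lmap hq.1, mul_zero]
    · rw [Lmap_spci ha hq.1]
      rfl

theorem finrank_spciSubspace {a : Fin N → F} (ha : a ≠ 0) :
    Module.finrank ℝ (spciSubspace a) = Fintype.card F - 1 :=
  (LinearEquiv.finrank_eq (Submodule.equivMapOfInjective _
    (LinearMap.funLeft_injective_of_surjective _ _ _ (adot_surjective ha)) _)).symm.trans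
    (finrank_ker_sumLM F)

theorem spciSubspace_le_ker_sumLM {a : Fin N → F} (ha : a ≠ 0) :
    spciSubspace a ≤ LinearMap.ker (sumLM (Fin N → F)) := by
  classical
  rintro _ ⟨w, hw, rfl⟩
  rw [SetLike.mem_coe, mem_ker_sumLM] at hw
  exact ((adotHom a).sum_comp_of_surjective (adot_surjective ha) w).trans (by rw [hw, smul_zero])

theorem dotProduct_eq_zero_of_mem_spciSubspace {a b : Fin N → F}
    (hab : LinearIndependent F ![a, b]) {v w : (Fin N → F) → ℝ} (hv : v ∈ spciSubspace a)
    (hw : w ∈ spciSubspace b) : v ⬝ᵥ w = 0 := by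
  classical
  obtain ⟨v', hv', rfl⟩ := hv
  obtain ⟨w', -, rfl⟩ := hw
  rw [SetLike.mem_coe, mem_ker_sumLM] at hv'
  let A : Matrix (Fin 2) (Fin N) F := Matrix.of ![a, b]
  have h := A.mulVecLin.toAddMonoidHom.sum_comp_of_surjective
    (Matrix.mulVec_surjective_of_linearIndependent_row hab) fun y => v' (y 0) * w' (y 1)
  rw [sum_pi_fin_two_mul_eq_sum_mul_sum, hv', zero_mul, smul_zero] at h
  exact h

end spci

/-- Given representatives `a_1, …, a_M` of the `M = (m^N-1)/(m-1)`
one-dimensional subspaces of `F^N`, the PMF space `V_{F^N}` is the orthogonal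
direct sum of the SPCI subspaces `V_{F^N}^{a_i}` (realized via the linear
isometry `L`, under which `V_{F^N}` corresponds to the zero-sum hyperplane and
the inner product to the Euclidean one): the subspaces are pairwise orthogonal,
their supremum is all of (the image of) `V_{F^N}`, each has dimension `m - 1`,
and their dimensions sum to `m^N - 1`. -/
theorem stmt_15 {F : Type*} [Field F] [Fintype F] {N M : ℕ}
    (hM : M = (Fintype.card F ^ N - 1) / (Fintype.card F - 1))
    (a : Fin M → Fin N → F) (h0 : ∀ i, a i ≠ 0)
    (hind : ∀ i j, i ≠ j → ∀ α : F, a i ≠ α • a j) :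
    ∃ W : Fin M → Submodule ℝ ((Fin N → F) → ℝ),
      (∀ i, (W i : Set ((Fin N → F) → ℝ)) =
        {v | ∃ q : F → ℝ, IsPPMF q ∧ v = Lmap (spci (a i) q)}) ∧
      (∀ i j, i ≠ j → ∀ v ∈ W i, ∀ w ∈ W j, ∑ x, v x * w x = 0) ∧
      (⨆ i, W i) = LinearMap.ker (sumLM (Fin N → F)) ∧
      (∀ i, Module.finrank ℝ (W i) = Fintype.card F - 1) ∧
      ∑ i, Module.finrank ℝ (W i) = Fintype.card F ^ N - 1 := by
  have horth : Pairwise fun i j =>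
      ∀ v ∈ spciSubspace (a i), ∀ w ∈ spciSubspace (a j), v ⬝ᵥ w = 0 :=
    fun i j hij v hv w hw => (dotProduct_comm v w).trans <|
      dotProduct_eq_zero_of_mem_spciSubspace
        ((LinearIndependent.pair_iff' (h0 j)).2 fun α h => hind i j hij α h.symm) hw hv
  have hcount : M * (Fintype.card F - 1) = Fintype.card F ^ N - 1 := by
    rw [hM]
    exact Nat.div_mul_cancel (by simpa using Nat.sub_dvd_pow_sub_pow (Fintype.card F) 1 N)
  have hsum : ∑ i, Module.finrank ℝ (spciSubspace (a i)) = Fintype.card F ^ N - 1 := by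
    simp [finrank_spciSubspace (h0 _), hcount]
  refine ⟨fun i => spciSubspace (a i), fun i => coe_spciSubspace (h0 i), horth, ?_,
    fun i => finrank_spciSubspace (h0 i), hsum⟩
  refine Submodule.eq_of_le_of_finrank_eq (iSup_le fun i => spciSubspace_le_ker_sumLM (h0 i)) ?_
  rw [Submodule.finrank_iSup_of_iSupIndep (iSupIndep_of_pairwise_dotProduct_eq_zero horth), hsum,
    finrank_ker_sumLM, Fintype.card_fun, Fintype.card_fin]
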